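/- arXiv:2308.12197 — 5 statements merged into one kernel-verified Lean document; each statement's English description precedes it below -/
import Mathlib

section
/- Let A > 1 and 1 ≤ b ≤ 3/2 with (3/2 - b)² ≥ 2(b-1)(A-1). Then the equation a·e^{-(b-1)a}/(1 - e^{-a}) = A has a positive solution a satisfying a ≤ 2(A-1)/(3/2 - b). -/
open Real

lemma exp_neg_le_quad {x : ℝ} (hx : 0 ≤ x) : Real.exp (-x) ≤ 1 - x + x ^ 2 / 2 := by
  have hmono : MonotoneOn (fun t : ℝ => 1 - t + t ^ 2 / 2 - Real.exp (-t)) (Set.Ici 0) := by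
    apply monotoneOn_of_deriv_nonneg (convex_Ici 0)
    · fun_prop
    · fun_prop
    · intro y hy
      have hd : HasDerivAt (fun t : ℝ => 1 - t + t ^ 2 / 2 - Real.exp (-t))
          (-1 + y + Real.exp (-y)) y := by
        have h1 : HasDerivAt (fun t : ℝ => Real.exp (-t)) (-Real.exp (-y)) y := by
          simpa [Function.comp_def] using (Real.hasDerivAt_exp (-y)).comp y (hasDerivAt_neg y)
        have h2 : HasDerivAt (fun t : ℝ => 1 - t + t ^ 2 / 2) (-1 + y) y := by
          have := ((hasDerivAt_pow 2 y).div_const 2)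
          have h3 : HasDerivAt (fun t : ℝ => 1 - t) (-1) y := by
            simpa [Pi.sub_def] using (hasDerivAt_const y (1:ℝ)).sub (hasDerivAt_id y)
          simpa [pow_one, Pi.add_def] using h3.add this
        simpa [Pi.sub_def] using h2.sub h1
      rw [hd.deriv]
      have := Real.add_one_le_exp (-y)
      linarith
  have h0 : (0:ℝ) ∈ Set.Ici (0:ℝ) := Set.self_mem_Ici
  have := hmono h0 hx hx
  simp at this
  linarith

lemma one_add_half_mul_le {a : ℝ} (ha : 0 ≤ a) :
    (1 + a / 2) * (1 - Real.exp (-a)) ≤ a := by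
  have hmono : MonotoneOn (fun t : ℝ => t - (1 + t / 2) * (1 - Real.exp (-t))) (Set.Ici 0) := by
    apply monotoneOn_of_deriv_nonneg (convex_Ici 0)
    · fun_prop
    · fun_prop
    · intro y hy
      have hexp : HasDerivAt (fun t : ℝ => Real.exp (-t)) (-Real.exp (-y)) y := by
        simpa [Function.comp_def] using (Real.hasDerivAt_exp (-y)).comp y (hasDerivAt_neg y)
      have hd : HasDerivAt (fun t : ℝ => t - (1 + t / 2) * (1 - Real.exp (-t)))
          (1 - ((1 / 2) * (1 - Real.exp (-y)) + (1 + y / 2) * Real.exp (-y))) y := by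
        have h1 : HasDerivAt (fun t : ℝ => 1 + t / 2) (1 / 2) y := by
          simpa [Pi.add_def] using (hasDerivAt_const y (1:ℝ)).add ((hasDerivAt_id y).div_const 2)
        have h2 : HasDerivAt (fun t : ℝ => 1 - Real.exp (-t)) (Real.exp (-y)) y := by
          simpa [Pi.sub_def] using (hasDerivAt_const y (1:ℝ)).sub hexp
        exact (hasDerivAt_id y).sub (h1.mul h2)
      rw [hd.deriv]
      have h3 := Real.add_one_le_exp y
      have h4 : Real.exp (-y) = (Real.exp y)⁻¹ := Real.exp_neg y
      have h5 := Real.exp_pos y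
      have h6 : (y + 1) * Real.exp (-y) ≤ 1 := by
        rw [h4]
        rw [mul_inv_le_iff₀ h5]
        linarith
      have h7 := Real.exp_pos (-y)
      nlinarith
  have h0 : (0:ℝ) ∈ Set.Ici (0:ℝ) := Set.self_mem_Ici
  have := hmono h0 ha ha
  simp at this
  nlinarith

set_option maxHeartbeats 1000000 in
theorem fixed_point_exists_with_bound (A b : ℝ) (hA : 1 < A) (hb1 : 1 ≤ b) (hb2 : b ≤ 3 / 2)
    (hAb : 2 * (b - 1) * (A - 1) ≤ (3 / 2 - b) ^ 2) :
    ∃ a : ℝ, 0 < a ∧ a * Real.exp (-(b - 1) * a) / (1 - Real.exp (-a)) = A ∧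
      a ≤ 2 * (A - 1) / (3 / 2 - b) := by
  set s : ℝ := 3 / 2 - b with hs_def
  have hs : 0 < s := by
    rcases lt_or_ge b (3 / 2) with h | h
    · rw [hs_def]; linarith
    · exfalso
      have hb : b = 3 / 2 := le_antisymm hb2 h
      rw [hs_def, hb] at hAb
      norm_num at hAb
      linarith
  set a0 : ℝ := 2 * (A - 1) / s with ha0_def
  have ha0 : 0 < a0 := div_pos (by linarith) hs
  have hsa0 : s * a0 = 2 * (A - 1) := by
    rw [ha0_def]; field_simp
  have hca0 : (b - 1) * a0 ≤ s := by
    rw [ha0_def, ← mul_div_assoc, div_le_iff₀ hs]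
    nlinarith
  set ε : ℝ := min (a0 / 2) ((A - 1) / A) with hε_def
  have hApos : (0:ℝ) < A := by linarith
  have hεpos : 0 < ε :=
    lt_min (by linarith) (div_pos (by linarith) hApos)
  have hεa0 : ε ≤ a0 := le_trans (min_le_left _ _) (by linarith)
  have hεA : ε ≤ (A - 1) / A := min_le_right _ _
  have hε1 : ε < 1 := lt_of_le_of_lt hεA (by rw [div_lt_one hApos]; linarith)
  set g : ℝ → ℝ := fun a => a * Real.exp (-(b - 1) * a) / (1 - Real.exp (-a)) with hg_def
  -- denominator positive on positive reals
  have hden : ∀ x : ℝ, 0 < x → 0 < 1 - Real.exp (-x) := by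
    intro x hx
    have : Real.exp (-x) < 1 := by
      rw [Real.exp_lt_one_iff]; linarith
    linarith
  -- continuity
  have hcont : ContinuousOn g (Set.Icc ε a0) := by
    apply ContinuousOn.div
    · fun_prop
    · fun_prop
    · intro x hx
      have := hden x (lt_of_lt_of_le hεpos hx.1)
      linarith
  -- g ε < A
  have hgε : g ε < A := by
    have hd := hden ε hεpos
    have hnum : ε * Real.exp (-(b - 1) * ε) ≤ ε := by
      have : Real.exp (-(b - 1) * ε) ≤ 1 := by
        rw [Real.exp_le_one_iff]
        nlinarith
      nlinarith
    have hlow : ε * (1 - ε / 2) ≤ 1 - Real.exp (-ε) := by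
      have := exp_neg_le_quad (le_of_lt hεpos)
      nlinarith
    have hpos2 : 0 < ε * (1 - ε / 2) := by nlinarith
    have h1 : g ε ≤ ε / (ε * (1 - ε / 2)) := by
      rw [hg_def]
      apply div_le_div₀ hεpos.le hnum hpos2 hlow
    have h2 : ε / (ε * (1 - ε / 2)) = 1 / (1 - ε / 2) := by
      rw [div_mul_eq_div_div, div_self (ne_of_gt hεpos)]
    rw [h2] at h1
    have h3 : 1 / (1 - ε / 2) < A := by
      rw [div_lt_iff₀ (by linarith)]
      have h4 : ε * A ≤ A - 1 := (le_div_iff₀ hApos).mp hεA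
      nlinarith
    linarith
  -- g a0 ≥ A
  have hga0 : A ≤ g a0 := by
    have hd := hden a0 ha0
    have hkey := one_add_half_mul_le ha0.le
    have hepos : 0 < Real.exp (-(b - 1) * a0) := Real.exp_pos _
    have h1 : (1 + a0 / 2) * Real.exp (-(b - 1) * a0) ≤ g a0 := by
      rw [hg_def, le_div_iff₀ hd]
      nlinarith [mul_le_mul_of_nonneg_right hkey hepos.le]
    have h2 : 1 - (b - 1) * a0 ≤ Real.exp (-(b - 1) * a0) := by
      have := Real.add_one_le_exp (-(b - 1) * a0)
      linarith
    have hA1 : (3 / 2 - b) * a0 = 2 * (A - 1) := by rw [← hs_def]; exact hsa0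
    have hca0' : (b - 1) * a0 ≤ 3 / 2 - b := by rw [← hs_def]; exact hca0
    have h3 : A ≤ (1 + a0 / 2) * (1 - (b - 1) * a0) := by
      nlinarith [hA1, mul_le_mul_of_nonneg_left hca0' ha0.le]
    have h4 : (1 + a0 / 2) * (1 - (b - 1) * a0) ≤ (1 + a0 / 2) * Real.exp (-(b - 1) * a0) := by
      apply mul_le_mul_of_nonneg_left h2 (by linarith)
    linarith
  obtain ⟨a, haI, hga⟩ := intermediate_value_Icc hεa0 hcont ⟨hgε.le, hga0⟩
  exact ⟨a, lt_of_lt_of_le hεpos haI.1, hga, haI.2⟩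
end

section
/- Let A > 1 and define z_k recursively by z₀(t) = t and z_k(t) = A·(e^{z_{k-1}(t)} - 1). Then for each fixed t < 0, as k → ∞ the sequence z_k(t) converges to -a, where a > 0 is the unique positive real number satisfying -a = A(e^{-a} - 1). -/
open Filter

private lemma exp_comb {p x q : ℝ} (h1 : p < x) (h2 : x < q) :
    Real.exp x < ((q - x) / (q - p)) * Real.exp p + ((x - p) / (q - p)) * Real.exp q := by
  have hpq : p < q := h1.trans h2
  have hqp : q - p ≠ 0 := by intro h; linarith [sub_eq_zero.mp h]
  have ha : (0:ℝ) < (q - x) / (q - p) := div_pos (by linarith) (by linarith)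
  have hb : (0:ℝ) < (x - p) / (q - p) := div_pos (by linarith) (by linarith)
  have hab : (q - x) / (q - p) + (x - p) / (q - p) = 1 := by
    rw [← add_div, div_eq_one_iff_eq hqp]; ring
  have hx : ((q - x) / (q - p)) * p + ((x - p) / (q - p)) * q = x := by
    rw [div_mul_eq_mul_div, div_mul_eq_mul_div, ← add_div, div_eq_iff hqp]; ring
  have := strictConvexOn_exp.2 (Set.mem_univ p) (Set.mem_univ q) hpq.ne ha hb hab
  simp only [smul_eq_mul] at this
  rwa [hx] at this

/-- g x = A * (exp x - 1) - x is strictly convex; combination inequality. -/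
private lemma g_comb (A : ℝ) (hA0 : 0 < A) {p x q : ℝ} (h1 : p < x) (h2 : x < q) :
    A * (Real.exp x - 1) - x <
      ((q - x) / (q - p)) * (A * (Real.exp p - 1) - p)
        + ((x - p) / (q - p)) * (A * (Real.exp q - 1) - q) := by
  have hpq : p < q := h1.trans h2
  have hqp : q - p ≠ 0 := by intro h; linarith [sub_eq_zero.mp h]
  have hE := exp_comb h1 h2
  have hab : (q - x) / (q - p) + (x - p) / (q - p) = 1 := by
    rw [← add_div, div_eq_one_iff_eq hqp]; ring
  have hx : ((q - x) / (q - p)) * p + ((x - p) / (q - p)) * q = x := by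
    rw [div_mul_eq_mul_div, div_mul_eq_mul_div, ← add_div, div_eq_iff hqp]; ring
  nlinarith [hE, hab, hx]

/-- Between two roots of g, g is negative. -/
private lemma g_neg_between (A : ℝ) (hA0 : 0 < A) {p x q : ℝ} (h1 : p < x) (h2 : x < q)
    (hp : A * (Real.exp p - 1) - p = 0) (hq : A * (Real.exp q - 1) - q = 0) :
    A * (Real.exp x - 1) - x < 0 := by
  have := g_comb A hA0 h1 h2
  rw [hp, hq] at this
  simpa using this

/-- Left of two roots of g, g is positive. -/
private lemma g_pos_left (A : ℝ) (hA0 : 0 < A) {x p q : ℝ} (h1 : x < p) (h2 : p < q)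
    (hp : A * (Real.exp p - 1) - p = 0) (hq : A * (Real.exp q - 1) - q = 0) :
    0 < A * (Real.exp x - 1) - x := by
  have hc := g_comb A hA0 h1 h2
  rw [hp, hq] at hc
  have ha : (0:ℝ) < (q - p) / (q - x) := div_pos (by linarith) (by linarith)
  by_contra h
  push_neg at h
  have : ((q - p) / (q - x)) * (A * (Real.exp x - 1) - x) ≤ 0 :=
    mul_nonpos_of_nonneg_of_nonpos ha.le h
  linarith

theorem z_seq_tendsto (A : ℝ) (hA : 1 < A) (z : ℕ → ℝ → ℝ)
    (hz0 : ∀ t, z 0 t = t)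
    (hzs : ∀ k t, z (k + 1) t = A * (Real.exp (z k t) - 1)) :
    ∃ a : ℝ, 0 < a ∧ -a = A * (Real.exp (-a) - 1) ∧
      (∀ a' : ℝ, 0 < a' → -a' = A * (Real.exp (-a') - 1) → a' = a) ∧
      ∀ t < (0 : ℝ), Tendsto (fun k => z k t) atTop (nhds (-a)) := by
  have hA0 : (0:ℝ) < A := lt_trans one_pos hA
  have hg00 : A * (Real.exp 0 - 1) - 0 = 0 := by simp
  set g : ℝ → ℝ := fun x => A * (Real.exp x - 1) - x with hg
  have hgcont : Continuous g := by fun_prop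
  -- endpoints for IVT
  have hx0 : (0:ℝ) < g (-A - 1) := by
    have := Real.exp_pos (-A - 1)
    show (0:ℝ) < A * (Real.exp (-A - 1) - 1) - (-A - 1)
    nlinarith
  have hx1 : g (-(A - 1) / 2) < 0 := by
    show A * (Real.exp (-(A - 1) / 2) - 1) - (-(A - 1) / 2) < 0
    set s : ℝ := (A - 1) / 2 with hs
    have hseq : -(A - 1) / 2 = -s := by rw [hs]; ring
    rw [hseq]
    have hs0 : 0 < s := by rw [hs]; linarith
    have hE : Real.exp (-s) * Real.exp s = 1 := by rw [← Real.exp_add]; simp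
    have h2 : s + 1 < Real.exp s := Real.add_one_lt_exp hs0.ne'
    have h3 : Real.exp (-s) * (1 + s) < 1 := by nlinarith [Real.exp_pos (-s)]
    have h4 : Real.exp (-s) - 1 < 0 := by nlinarith [Real.exp_pos s]
    have h5 : 1 + s < A := by rw [hs]; linarith
    nlinarith
  -- existence of root
  have hle : -A - 1 ≤ -(A - 1) / 2 := by linarith
  obtain ⟨c, hcmem, hcroot⟩ : ∃ c ∈ Set.Icc (-A - 1) (-(A-1)/2), g c = 0 := by
    have := intermediate_value_Icc' hle hgcont.continuousOn
      (Set.mem_Icc.mpr ⟨hx1.le, hx0.le⟩)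
    obtain ⟨c, hc1, hc2⟩ := this
    exact ⟨c, hc1, hc2⟩
  have hcroot' : A * (Real.exp c - 1) - c = 0 := hcroot
  have hcneg : c < 0 := lt_of_le_of_lt hcmem.2 (by linarith)
  refine ⟨-c, by linarith, ?_, ?_, ?_⟩
  · simp only [neg_neg]
    linarith
  · -- uniqueness
    intro a' ha'pos ha'
    have hroot' : A * (Real.exp (-a') - 1) - (-a') = 0 := by linarith
    by_contra hne
    have hne2 : -a' ≠ c := fun h => hne (by linarith)
    rcases lt_or_gt_of_ne hne2 with h | h
    · have := g_neg_between A hA0 h hcneg hroot' hg00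
      linarith
    · have := g_neg_between A hA0 h (by linarith : -a' < 0) hcroot' hg00
      linarith
  · -- convergence
    intro t ht
    simp only [neg_neg]
    have hfc : A * (Real.exp c - 1) = c := by linarith
    have hfmono : ∀ x y : ℝ, x ≤ y → A * (Real.exp x - 1) ≤ A * (Real.exp y - 1) := by
      intro x y hxy
      have := Real.exp_le_exp.mpr hxy
      nlinarith
    have hfmono' : ∀ x y : ℝ, x < y → A * (Real.exp x - 1) < A * (Real.exp y - 1) := by
      intro x y hxy
      have := Real.exp_lt_exp.mpr hxy
      nlinarith
    -- limit is a fixed point, and negative limit forces L = c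
    have key : ∀ L : ℝ, L < 0 → Tendsto (fun k => z k t) atTop (nhds L) →
        Tendsto (fun k => z k t) atTop (nhds c) := by
      intro L hLneg hL
      have h1 : Tendsto (fun k => z (k + 1) t) atTop (nhds L) :=
        hL.comp (tendsto_add_atTop_nat 1)
      have hfcont : Continuous fun x : ℝ => A * (Real.exp x - 1) := by fun_prop
      have h2 : Tendsto (fun k => A * (Real.exp (z k t) - 1)) atTop
          (nhds (A * (Real.exp L - 1))) := (hfcont.tendsto L).comp hL
      have h3 : (fun k => z (k + 1) t) = fun k => A * (Real.exp (z k t) - 1) := by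
        funext k; exact hzs k t
      rw [h3] at h1
      have hfix : A * (Real.exp L - 1) = L := tendsto_nhds_unique h2 h1
      have hgL : A * (Real.exp L - 1) - L = 0 := by linarith
      have hLc : L = c := by
        by_contra hne
        rcases lt_or_gt_of_ne hne with h | h
        · have := g_neg_between A hA0 h hcneg hgL hg00
          linarith
        · have := g_neg_between A hA0 h hLneg hcroot' hg00
          linarith
      rwa [hLc] at hL
    rcases le_or_gt c t with hct | htc
    · -- c ≤ t < 0 : antitone, bounded below by c
      have hinv : ∀ k, c ≤ z k t ∧ z k t < 0 := by
        intro k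
        induction k with
        | zero => rw [hz0]; exact ⟨hct, ht⟩
        | succ n ih =>
          rw [hzs]
          refine ⟨?_, ?_⟩
          · have := hfmono c (z n t) ih.1
            linarith
          · have := hfmono' (z n t) 0 ih.2
            simp only [Real.exp_zero] at this
            linarith
      have hanti : Antitone (fun k => z k t) := by
        apply antitone_nat_of_succ_le
        intro n
        rcases eq_or_lt_of_le (hinv n).1 with h | h
        · rw [hzs, ← h, hfc]
        · have hgneg := g_neg_between A hA0 h (hinv n).2 hcroot' hg00
          rw [hzs]; linarith
      have hbdd : BddBelow (Set.range fun k => z k t) := by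
        refine ⟨c, ?_⟩
        rintro x ⟨k, rfl⟩
        exact (hinv k).1
      have hL := tendsto_atTop_ciInf hanti hbdd
      have hLle : (⨅ k, z k t) ≤ t := by
        have := ciInf_le hbdd 0
        rwa [hz0] at this
      exact key _ (lt_of_le_of_lt hLle ht) hL
    · -- t < c : monotone increasing, bounded above by c
      have hinv : ∀ k, z k t ≤ c := by
        intro k
        induction k with
        | zero => rw [hz0]; exact htc.le
        | succ n ih =>
          rw [hzs]
          have := hfmono (z n t) c ih
          linarith
      have hmono : Monotone (fun k => z k t) := by
        apply monotone_nat_of_le_succ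
        intro n
        rcases eq_or_lt_of_le (hinv n) with h | h
        · rw [hzs, h]; linarith
        · have hgpos := g_pos_left A hA0 h hcneg hcroot' hg00
          rw [hzs]; linarith
      have hbdd : BddAbove (Set.range fun k => z k t) := by
        refine ⟨c, ?_⟩
        rintro x ⟨k, rfl⟩
        exact hinv k
      have hL := tendsto_atTop_ciSup hmono hbdd
      have hLle : (⨆ k, z k t) ≤ c := ciSup_le hinv
      exact key _ (lt_of_le_of_lt hLle hcneg) hL
end

section
/- Let f : ℝ → ℝ be continuously differentiable, supported in [-1-2r, -1+2r] ∪ [1-2r, 1+2r] with 0 < r ≤ 1/4, and vanishing at the endpoints of its support. Then ‖f‖_{L¹} ≤ √(32r³/3)·‖f'‖_{L²}. -/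
open MeasureTheory

lemma prim_hasDerivAt (g : ℝ → ℝ) (hg : Continuous g) (a x : ℝ) :
    HasDerivAt (fun u => ∫ t in a..u, |g t|) (|g x|) x :=
  intervalIntegral.integral_hasDerivAt_right ((hg.abs).intervalIntegrable _ _)
    (hg.abs.stronglyMeasurable.stronglyMeasurableAtFilter) hg.abs.continuousAt

lemma prim_cont (g : ℝ → ℝ) (hg : Continuous g) (a : ℝ) :
    Continuous (fun u => ∫ t in a..u, |g t|) :=
  continuous_iff_continuousAt.2 fun x => (prim_hasDerivAt g hg a x).continuousAt

lemma parts_left (g : ℝ → ℝ) (hg : Continuous g) (a b : ℝ) :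
    (∫ x in a..b, (∫ t in a..x, |g t|)) = ∫ t in a..b, (b - t) * |g t| := by
  set G := fun u => ∫ t in a..u, |g t| with hG
  have hGc : Continuous G := prim_cont g hg a
  have hΦ : ∀ x, HasDerivAt (fun u => (u - b) * G u) (G x + (x - b) * |g x|) x := by
    intro x
    have h1 : HasDerivAt (fun u => (u - b) * G u) (1 * G x + (x - b) * |g x|) x :=
      ((hasDerivAt_id x).sub_const b).mul (prim_hasDerivAt g hg a x)
    convert h1 using 1
    ring
  have hint : IntervalIntegrable (fun x => G x + (x - b) * |g x|) volume a b :=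
    (hGc.add (((continuous_id.sub continuous_const)).mul hg.abs)).intervalIntegrable _ _
  have key : (∫ x in a..b, (G x + (x - b) * |g x|)) = (b - b) * G b - (a - b) * G a :=
    intervalIntegral.integral_eq_sub_of_hasDerivAt (fun x _ => hΦ x) hint
  have hGa : G a = 0 := intervalIntegral.integral_same
  rw [hGa] at key
  have hsplit : (∫ x in a..b, (G x + (x - b) * |g x|)) =
      (∫ x in a..b, G x) + ∫ x in a..b, (x - b) * |g x| :=
    intervalIntegral.integral_add (hGc.intervalIntegrable _ _)
      (((continuous_id.sub continuous_const).mul hg.abs).intervalIntegrable _ _)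
  have hneg : (∫ t in a..b, (b - t) * |g t|) = - ∫ x in a..b, (x - b) * |g x| := by
    rw [← intervalIntegral.integral_neg]
    congr 1; funext t; ring
  rw [hsplit] at key
  rw [hneg]; linarith

lemma parts_right (g : ℝ → ℝ) (hg : Continuous g) (a b : ℝ) :
    (∫ x in a..b, (∫ t in x..b, |g t|)) = ∫ t in a..b, (t - a) * |g t| := by
  have hrw : ∀ x, (∫ t in x..b, |g t|) = (∫ t in a..b, |g t|) - ∫ t in a..x, |g t| := by
    intro x
    rw [intervalIntegral.integral_interval_sub_left (hg.abs.intervalIntegrable _ _)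
      (hg.abs.intervalIntegrable _ _)]
  have h1 : (∫ x in a..b, (∫ t in x..b, |g t|)) =
      (∫ x in a..b, ((∫ t in a..b, |g t|) - ∫ t in a..x, |g t|)) := by
    congr 1; funext x; exact hrw x
  rw [h1, intervalIntegral.integral_sub (intervalIntegrable_const)
      ((prim_cont g hg a).intervalIntegrable _ _),
    intervalIntegral.integral_const, parts_left g hg a b]
  have hint1 : IntervalIntegrable (fun t => (b - a) * |g t|) volume a b :=
    (continuous_const.mul hg.abs).intervalIntegrable _ _
  have hint2 : IntervalIntegrable (fun t => (b - t) * |g t|) volume a b :=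
    ((continuous_const.sub continuous_id).mul hg.abs).intervalIntegrable _ _
  rw [smul_eq_mul, ← intervalIntegral.integral_const_mul,
    ← intervalIntegral.integral_sub hint1 hint2]
  congr 1; funext t; ring

lemma interval_CS (w g : ℝ → ℝ) (hw : Continuous w) (hg : Continuous g) (a b : ℝ)
    (hab : a ≤ b) :
    (∫ t in a..b, |w t| * |g t|) ≤
      Real.sqrt (∫ t in a..b, (w t) ^ 2) * Real.sqrt (∫ t in a..b, (g t) ^ 2) := by
  set A := ∫ t in a..b, (w t) ^ 2 with hA
  set C := ∫ t in a..b, (g t) ^ 2 with hC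
  set B := ∫ t in a..b, |w t| * |g t| with hB
  have hA0 : 0 ≤ A := intervalIntegral.integral_nonneg hab fun t _ => sq_nonneg _
  have hC0 : 0 ≤ C := intervalIntegral.integral_nonneg hab fun t _ => sq_nonneg _
  have hB0 : 0 ≤ B := intervalIntegral.integral_nonneg hab fun t _ =>
    mul_nonneg (abs_nonneg _) (abs_nonneg _)
  have hiw : IntervalIntegrable (fun t => (w t)^2) volume a b := (hw.pow 2).intervalIntegrable _ _
  have hig : IntervalIntegrable (fun t => (g t)^2) volume a b := (hg.pow 2).intervalIntegrable _ _
  have hiwg : IntervalIntegrable (fun t => |w t| * |g t|) volume a b :=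
    (hw.abs.mul hg.abs).intervalIntegrable _ _
  have hdisc : ∀ lam : ℝ, 0 ≤ C * (lam * lam) + (-2 * B) * lam + A := by
    intro lam
    have hnn : 0 ≤ ∫ t in a..b, (|w t| - lam * |g t|) ^ 2 :=
      intervalIntegral.integral_nonneg hab fun t _ => sq_nonneg _
    have heq : (∫ t in a..b, (|w t| - lam * |g t|) ^ 2) =
        C * (lam * lam) + (-2 * B) * lam + A := by
      have h1 : (∫ t in a..b, (|w t| - lam * |g t|) ^ 2) =
          ∫ t in a..b, ((lam * lam) * (g t)^2 + (-2 * lam) * (|w t| * |g t|) + (w t)^2) := by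
        congr 1; funext t
        nlinarith [sq_abs (w t), sq_abs (g t)]
      rw [h1, intervalIntegral.integral_add ((hig.const_mul _).add (hiwg.const_mul _)) hiw,
        intervalIntegral.integral_add (hig.const_mul _) (hiwg.const_mul _),
        intervalIntegral.integral_const_mul, intervalIntegral.integral_const_mul]
      ring
    linarith [heq ▸ hnn]
  have hd := discrim_le_zero hdisc
  rw [discrim] at hd
  have hBsq : B ^ 2 ≤ A * C := by nlinarith
  calc B = Real.sqrt (B ^ 2) := (Real.sqrt_sq hB0).symm
    _ ≤ Real.sqrt (A * C) := Real.sqrt_le_sqrt hBsq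
    _ = Real.sqrt A * Real.sqrt C := Real.sqrt_mul hA0 _

lemma int_zero_of_Ioo (g : ℝ → ℝ) (c d : ℝ) (hcd : c ≤ d)
    (h : ∀ t ∈ Set.Ioo c d, g t = 0) : (∫ t in c..d, g t) = 0 := by
  rw [intervalIntegral.integral_of_le hcd, MeasureTheory.integral_Ioc_eq_integral_Ioo,
    MeasureTheory.setIntegral_congr_fun measurableSet_Ioo
      (fun t ht => h t ht : Set.EqOn g (fun _ => (0:ℝ)) _)]
  simp

lemma sqrt_add_le_sqrt_two_mul (B1 B2 B : ℝ) (h1 : 0 ≤ B1) (h2 : 0 ≤ B2)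
    (hs : B1 + B2 ≤ B) :
    Real.sqrt B1 + Real.sqrt B2 ≤ Real.sqrt 2 * Real.sqrt B := by
  have hsq : (Real.sqrt B1 + Real.sqrt B2) ^ 2 ≤ 2 * B := by
    nlinarith [Real.sq_sqrt h1, Real.sq_sqrt h2, Real.sqrt_nonneg B1,
      Real.sqrt_nonneg B2, sq_nonneg (Real.sqrt B1 - Real.sqrt B2)]
  calc Real.sqrt B1 + Real.sqrt B2
      = Real.sqrt ((Real.sqrt B1 + Real.sqrt B2) ^ 2) :=
        (Real.sqrt_sq (by positivity)).symm
    _ ≤ Real.sqrt (2 * B) := Real.sqrt_le_sqrt hsq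
    _ = Real.sqrt 2 * Real.sqrt B := Real.sqrt_mul (by norm_num) _

set_option maxHeartbeats 1600000 in
theorem L1_bound_by_L2_deriv (r : ℝ) (hr0 : 0 < r) (hr : r ≤ 1 / 4) (f : ℝ → ℝ)
    (hf : ContDiff ℝ 1 f)
    (hsupp : Function.support f ⊆
      Set.Icc (-1 - 2 * r) (-1 + 2 * r) ∪ Set.Icc (1 - 2 * r) (1 + 2 * r)) :
    ∫ x, |f x| ≤ Real.sqrt (32 * r ^ 3 / 3) * Real.sqrt (∫ x, (deriv f x) ^ 2) := by
  set a1 : ℝ := -1 - 2*r with ha1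
  set b1 : ℝ := -1 + 2*r with hb1
  set a2 : ℝ := 1 - 2*r with ha2
  set b2 : ℝ := 1 + 2*r with hb2
  set S : Set ℝ := Set.Icc a1 b1 ∪ Set.Icc a2 b2 with hS
  have hfc : Continuous f := hf.continuous
  have hg : Continuous (deriv f) := hf.continuous_deriv le_rfl
  -- vanishing outside S
  have hzero : ∀ x, x ∉ S → f x = 0 := by
    intro x hx
    by_contra h
    exact hx (hsupp h)
  have hSclosed : IsClosed S := (isClosed_Icc.union isClosed_Icc)
  have hdzero : ∀ x, x ∉ S → deriv f x = 0 := by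
    intro x hx
    have hev : f =ᶠ[nhds x] (fun _ => (0:ℝ)) :=
      Filter.eventuallyEq_of_mem (hSclosed.isOpen_compl.mem_nhds hx)
        (fun y hy => hzero y hy)
    rw [hev.deriv_eq]
    simp
  -- FTC
  have hftc : ∀ u v : ℝ, (∫ t in u..v, deriv f t) = f v - f u := fun u v =>
    intervalIntegral.integral_deriv_eq_sub
      (fun x _ => (hf.differentiable one_ne_zero).differentiableAt)
      (hg.intervalIntegrable _ _)
  -- vanishing at endpoints
  have hf0 : f 0 = 0 := by
    refine hzero 0 ?_
    rintro (⟨h1, h2⟩ | ⟨h1, h2⟩) <;> simp only [ha1, hb1, ha2, hb2] at * <;> linarith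
  have hfa2 : f a2 = 0 := by
    have hz : (∫ t in (0:ℝ)..a2, deriv f t) = 0 := by
      refine int_zero_of_Ioo _ _ _ (by simp only [ha2]; linarith) ?_
      intro t ht
      refine hdzero t ?_
      rintro (⟨h1, h2⟩ | ⟨h1, h2⟩) <;>
        simp only [ha1, hb1, ha2, hb2] at * <;> [linarith [ht.1]; linarith [ht.2]]
    have := hftc 0 a2
    rw [hz, hf0] at this
    linarith
  have hfb2 : f b2 = 0 := by
    have hout : f (b2 + 1) = 0 := by
      refine hzero _ ?_
      rintro (⟨h1, h2⟩ | ⟨h1, h2⟩) <;> simp only [ha1, hb1, ha2, hb2] at * <;> linarith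
    have hz : (∫ t in b2..(b2+1), deriv f t) = 0 := by
      refine int_zero_of_Ioo _ _ _ (by linarith) ?_
      intro t ht
      refine hdzero t ?_
      rintro (⟨h1, h2⟩ | ⟨h1, h2⟩) <;>
        simp only [ha1, hb1, ha2, hb2] at * <;> linarith [ht.1]
    have := hftc b2 (b2+1)
    rw [hz, hout] at this
    linarith
  have hfa1 : f a1 = 0 := by
    have hout : f (a1 - 1) = 0 := by
      refine hzero _ ?_
      rintro (⟨h1, h2⟩ | ⟨h1, h2⟩) <;> simp only [ha1, hb1, ha2, hb2] at * <;> linarith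
    have hz : (∫ t in (a1-1)..a1, deriv f t) = 0 := by
      refine int_zero_of_Ioo _ _ _ (by linarith) ?_
      intro t ht
      refine hdzero t ?_
      rintro (⟨h1, h2⟩ | ⟨h1, h2⟩) <;>
        simp only [ha1, hb1, ha2, hb2] at * <;> linarith [ht.2]
    have := hftc (a1-1) a1
    rw [hz, hout] at this
    linarith
  have hfb1 : f b1 = 0 := by
    have hz : (∫ t in b1..(0:ℝ), deriv f t) = 0 := by
      refine int_zero_of_Ioo _ _ _ (by simp only [hb1]; linarith) ?_
      intro t ht
      refine hdzero t ?_
      rintro (⟨h1, h2⟩ | ⟨h1, h2⟩) <;>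
        simp only [ha1, hb1, ha2, hb2] at * <;> [linarith [ht.1]; linarith [ht.2]]
    have := hftc b1 0
    rw [hz, hf0] at this
    linarith
  -- ordering facts
  have hord1 : a1 ≤ -1 := by simp only [ha1]; linarith
  have hord2 : (-1:ℝ) ≤ b1 := by simp only [hb1]; linarith
  have hord3 : a2 ≤ 1 := by simp only [ha2]; linarith
  have hord4 : (1:ℝ) ≤ b2 := by simp only [hb2]; linarith
  have hord5 : a1 ≤ b1 := le_trans hord1 hord2
  have hord6 : a2 ≤ b2 := le_trans hord3 hord4
  have hord7 : b1 < a2 := by simp only [hb1, ha2]; linarith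
  -- pointwise bounds
  have hub3 : ∀ x ∈ Set.Icc a2 1, |f x| ≤ ∫ t in a2..x, |deriv f t| := by
    intro x hx
    have h1 : f x = ∫ t in a2..x, deriv f t := by rw [hftc a2 x, hfa2]; ring
    rw [h1]
    exact intervalIntegral.abs_integral_le_integral_abs hx.1
  have hub4 : ∀ x ∈ Set.Icc 1 b2, |f x| ≤ ∫ t in x..b2, |deriv f t| := by
    intro x hx
    have h1 : f x = -∫ t in x..b2, deriv f t := by rw [hftc x b2, hfb2]; ring
    rw [h1, abs_neg]
    exact intervalIntegral.abs_integral_le_integral_abs hx.2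
  have hub1 : ∀ x ∈ Set.Icc a1 (-1:ℝ), |f x| ≤ ∫ t in a1..x, |deriv f t| := by
    intro x hx
    have h1 : f x = ∫ t in a1..x, deriv f t := by rw [hftc a1 x, hfa1]; ring
    rw [h1]
    exact intervalIntegral.abs_integral_le_integral_abs hx.1
  have hub2 : ∀ x ∈ Set.Icc (-1:ℝ) b1, |f x| ≤ ∫ t in x..b1, |deriv f t| := by
    intro x hx
    have h1 : f x = -∫ t in x..b1, deriv f t := by rw [hftc x b1, hfb1]; ring
    rw [h1, abs_neg]
    exact intervalIntegral.abs_integral_le_integral_abs hx.2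
  -- continuity of right primitive
  have hcR : ∀ b : ℝ, Continuous (fun x => ∫ t in x..b, |deriv f t|) := by
    intro b
    have heq : (fun x => ∫ t in x..b, |deriv f t|) =
        (fun x => -(∫ t in b..x, |deriv f t|)) := by
      funext x; exact intervalIntegral.integral_symm b x
    rw [heq]
    exact (prim_cont _ hg b).neg
  -- quarter bounds
  have q1 : (∫ x in a1..(-1:ℝ), |f x|) ≤ ∫ t in a1..(-1:ℝ), ((-1) - t) * |deriv f t| := by
    calc (∫ x in a1..(-1:ℝ), |f x|)
        ≤ ∫ x in a1..(-1:ℝ), (∫ t in a1..x, |deriv f t|) :=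
          intervalIntegral.integral_mono_on hord1 (hfc.abs.intervalIntegrable _ _)
            ((prim_cont _ hg a1).intervalIntegrable _ _) hub1
      _ = _ := parts_left _ hg a1 (-1)
  have q2 : (∫ x in (-1:ℝ)..b1, |f x|) ≤ ∫ t in (-1:ℝ)..b1, (t - (-1)) * |deriv f t| := by
    calc (∫ x in (-1:ℝ)..b1, |f x|)
        ≤ ∫ x in (-1:ℝ)..b1, (∫ t in x..b1, |deriv f t|) :=
          intervalIntegral.integral_mono_on hord2 (hfc.abs.intervalIntegrable _ _)
            ((hcR b1).intervalIntegrable _ _) hub2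
      _ = _ := parts_right _ hg (-1) b1
  have q3 : (∫ x in a2..(1:ℝ), |f x|) ≤ ∫ t in a2..(1:ℝ), (1 - t) * |deriv f t| := by
    calc (∫ x in a2..(1:ℝ), |f x|)
        ≤ ∫ x in a2..(1:ℝ), (∫ t in a2..x, |deriv f t|) :=
          intervalIntegral.integral_mono_on hord3 (hfc.abs.intervalIntegrable _ _)
            ((prim_cont _ hg a2).intervalIntegrable _ _) hub3
      _ = _ := parts_left _ hg a2 1
  have q4 : (∫ x in (1:ℝ)..b2, |f x|) ≤ ∫ t in (1:ℝ)..b2, (t - 1) * |deriv f t| := by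
    calc (∫ x in (1:ℝ)..b2, |f x|)
        ≤ ∫ x in (1:ℝ)..b2, (∫ t in x..b2, |deriv f t|) :=
          intervalIntegral.integral_mono_on hord4 (hfc.abs.intervalIntegrable _ _)
            ((hcR b2).intervalIntegrable _ _) hub4
      _ = _ := parts_right _ hg 1 b2
  -- rewrite weights as absolute values
  have w1 : (∫ t in a1..(-1:ℝ), ((-1) - t) * |deriv f t|) =
      ∫ t in a1..(-1:ℝ), |t + 1| * |deriv f t| := by
    refine intervalIntegral.integral_congr fun t ht => ?_
    rw [Set.uIcc_of_le hord1] at ht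
    rw [abs_of_nonpos (by linarith [ht.2] : t + 1 ≤ 0)]
    ring
  have w2 : (∫ t in (-1:ℝ)..b1, (t - (-1)) * |deriv f t|) =
      ∫ t in (-1:ℝ)..b1, |t + 1| * |deriv f t| := by
    refine intervalIntegral.integral_congr fun t ht => ?_
    rw [Set.uIcc_of_le hord2] at ht
    rw [abs_of_nonneg (by linarith [ht.1] : (0:ℝ) ≤ t + 1)]
    ring
  have w3 : (∫ t in a2..(1:ℝ), (1 - t) * |deriv f t|) =
      ∫ t in a2..(1:ℝ), |1 - t| * |deriv f t| := by
    refine intervalIntegral.integral_congr fun t ht => ?_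
    rw [Set.uIcc_of_le hord3] at ht
    rw [abs_of_nonneg (by linarith [ht.2] : (0:ℝ) ≤ 1 - t)]
  have w4 : (∫ t in (1:ℝ)..b2, (t - 1) * |deriv f t|) =
      ∫ t in (1:ℝ)..b2, |1 - t| * |deriv f t| := by
    refine intervalIntegral.integral_congr fun t ht => ?_
    rw [Set.uIcc_of_le hord4] at ht
    rw [abs_of_nonpos (by linarith [ht.1] : 1 - t ≤ 0)]
    ring
  -- merge halves
  have hwcont1 : Continuous fun t : ℝ => |t + 1| * |deriv f t| :=
    ((continuous_id.add continuous_const).abs).mul hg.abs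
  have hwcont2 : Continuous fun t : ℝ => |1 - t| * |deriv f t| :=
    ((continuous_const.sub continuous_id).abs).mul hg.abs
  have hI1 : (∫ x in a1..b1, |f x|) ≤ ∫ t in a1..b1, |t + 1| * |deriv f t| := by
    have hsL : (∫ x in a1..(-1:ℝ), |f x|) + (∫ x in (-1:ℝ)..b1, |f x|)
        = ∫ x in a1..b1, |f x| :=
      intervalIntegral.integral_add_adjacent_intervals
        (hfc.abs.intervalIntegrable _ _) (hfc.abs.intervalIntegrable _ _)
    have hsR : (∫ t in a1..(-1:ℝ), |t + 1| * |deriv f t|)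
        + (∫ t in (-1:ℝ)..b1, |t + 1| * |deriv f t|)
        = ∫ t in a1..b1, |t + 1| * |deriv f t| :=
      intervalIntegral.integral_add_adjacent_intervals
        (hwcont1.intervalIntegrable _ _) (hwcont1.intervalIntegrable _ _)
    rw [w1] at q1; rw [w2] at q2
    linarith
  have hI2 : (∫ x in a2..b2, |f x|) ≤ ∫ t in a2..b2, |1 - t| * |deriv f t| := by
    have hsL : (∫ x in a2..(1:ℝ), |f x|) + (∫ x in (1:ℝ)..b2, |f x|)
        = ∫ x in a2..b2, |f x| :=
      intervalIntegral.integral_add_adjacent_intervals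
        (hfc.abs.intervalIntegrable _ _) (hfc.abs.intervalIntegrable _ _)
    have hsR : (∫ t in a2..(1:ℝ), |1 - t| * |deriv f t|)
        + (∫ t in (1:ℝ)..b2, |1 - t| * |deriv f t|)
        = ∫ t in a2..b2, |1 - t| * |deriv f t| :=
      intervalIntegral.integral_add_adjacent_intervals
        (hwcont2.intervalIntegrable _ _) (hwcont2.intervalIntegrable _ _)
    rw [w3] at q3; rw [w4] at q4
    linarith
  -- Cauchy–Schwarz on each interval
  have hcs1 : (∫ t in a1..b1, |t + 1| * |deriv f t|) ≤
      Real.sqrt (∫ t in a1..b1, (t + 1) ^ 2) *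
        Real.sqrt (∫ t in a1..b1, (deriv f t) ^ 2) :=
    interval_CS (fun t => t + 1) (deriv f) (continuous_id.add continuous_const) hg a1 b1 hord5
  have hcs2 : (∫ t in a2..b2, |1 - t| * |deriv f t|) ≤
      Real.sqrt (∫ t in a2..b2, (1 - t) ^ 2) *
        Real.sqrt (∫ t in a2..b2, (deriv f t) ^ 2) :=
    interval_CS (fun t => 1 - t) (deriv f) (continuous_const.sub continuous_id) hg a2 b2 hord6
  -- weight integrals
  have hW1 : (∫ t in a1..b1, (t + 1) ^ 2) = 16 * r ^ 3 / 3 := by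
    have hd : ∀ t : ℝ, HasDerivAt (fun t : ℝ => (t + 1) ^ 3 / 3) ((t + 1) ^ 2) t := by
      intro t
      have h : HasDerivAt (fun x => (x + 1) ^ 3 / 3) (((3:ℕ):ℝ) * (t + 1) ^ (3 - 1) * 1 / 3) t :=
        (((hasDerivAt_id t).add_const (1:ℝ)).pow 3).div_const 3
      convert h using 1
      ring
    rw [intervalIntegral.integral_eq_sub_of_hasDerivAt (fun t _ => hd t)
      (((continuous_id.add continuous_const).pow 2).intervalIntegrable _ _)]
    simp only [ha1, hb1]
    ring
  have hW2 : (∫ t in a2..b2, (1 - t) ^ 2) = 16 * r ^ 3 / 3 := by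
    have hd : ∀ t : ℝ, HasDerivAt (fun t : ℝ => -((1 - t) ^ 3) / 3) ((1 - t) ^ 2) t := by
      intro t
      have h : HasDerivAt (fun x => -((1 - x) ^ 3) / 3) (-(((3:ℕ):ℝ) * (1 - t) ^ (3 - 1) * -1) / 3) t :=
        ((((hasDerivAt_id t).const_sub (1:ℝ)).pow 3).neg).div_const 3
      convert h using 1
      ring
    rw [intervalIntegral.integral_eq_sub_of_hasDerivAt (fun t _ => hd t)
      (((continuous_const.sub continuous_id).pow 2).intervalIntegrable _ _)]
    simp only [ha2, hb2]
    ring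
  -- compact support and integrability
  have hcsupp : HasCompactSupport f := by
    refine IsCompact.of_isClosed_subset (isCompact_Icc.union isCompact_Icc)
      (isClosed_tsupport f) (closure_minimal hsupp hSclosed)
  have hintf : Integrable (fun x => |f x|) volume :=
    hfc.abs.integrable_of_hasCompactSupport (hcsupp.comp_left (g := fun y : ℝ => |y|) abs_zero)
  have hg2cs : HasCompactSupport (fun x => (deriv f x) ^ 2) :=
    (hcsupp.deriv).comp_left (g := fun y : ℝ => y ^ 2) (by norm_num)
  have hintg2 : Integrable (fun x => (deriv f x) ^ 2) volume :=
    (hg.pow 2).integrable_of_hasCompactSupport hg2cs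
  -- decomposition of the L1 norm
  have hdisj : Disjoint (Set.Ioc a1 b1) (Set.Ioc a2 b2) := by
    rw [Set.disjoint_left]
    rintro x ⟨_, hx2⟩ ⟨hx3, _⟩
    linarith
  have hL : (∫ x, |f x|) = (∫ x in a1..b1, |f x|) + ∫ x in a2..b2, |f x| := by
    have h0 : ∀ x ∉ (Set.Ioc a1 b1 ∪ Set.Ioc a2 b2), |f x| = 0 := by
      intro x hx
      rw [Set.mem_union] at hx
      push_neg at hx
      by_cases hxS : x ∈ S
      · rcases hxS with h | h
        · have : x = a1 := by
            rcases (lt_or_ge a1 x) with h' | h'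
            · exact absurd ⟨h', h.2⟩ hx.1
            · exact le_antisymm (by linarith [h.1]) h.1
          rw [this, hfa1, abs_zero]
        · have : x = a2 := by
            rcases (lt_or_ge a2 x) with h' | h'
            · exact absurd ⟨h', h.2⟩ hx.2
            · exact le_antisymm (by linarith [h.1]) h.1
          rw [this, hfa2, abs_zero]
      · rw [hzero x hxS, abs_zero]
    rw [← MeasureTheory.setIntegral_eq_integral_of_forall_compl_eq_zero h0,
      MeasureTheory.setIntegral_union hdisj measurableSet_Ioc
        hintf.integrableOn hintf.integrableOn,
      ← intervalIntegral.integral_of_le hord5, ← intervalIntegral.integral_of_le hord6]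
  -- bound on the L2 deriv pieces
  set B1 := ∫ t in a1..b1, (deriv f t) ^ 2 with hB1def
  set B2 := ∫ t in a2..b2, (deriv f t) ^ 2 with hB2def
  set Btot := ∫ x, (deriv f x) ^ 2 with hBdef
  have hB1nn : 0 ≤ B1 := intervalIntegral.integral_nonneg hord5 fun t _ => sq_nonneg _
  have hB2nn : 0 ≤ B2 := intervalIntegral.integral_nonneg hord6 fun t _ => sq_nonneg _
  have hBsum : B1 + B2 ≤ Btot := by
    have h1 : B1 + B2 = ∫ x in (Set.Ioc a1 b1 ∪ Set.Ioc a2 b2), (deriv f x) ^ 2 := by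
      rw [MeasureTheory.setIntegral_union hdisj measurableSet_Ioc
        hintg2.integrableOn hintg2.integrableOn, hB1def, hB2def,
        intervalIntegral.integral_of_le hord5, intervalIntegral.integral_of_le hord6]
    rw [h1]
    exact MeasureTheory.setIntegral_le_integral hintg2
      (Filter.Eventually.of_forall fun x => sq_nonneg _)
  have hBnn : 0 ≤ Btot := le_trans (by linarith) hBsum
  -- final combination
  have hWnn : (0:ℝ) ≤ 16 * r ^ 3 / 3 := by positivity
  have hsum : Real.sqrt B1 + Real.sqrt B2 ≤ Real.sqrt 2 * Real.sqrt Btot :=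
    sqrt_add_le_sqrt_two_mul B1 B2 Btot hB1nn hB2nn hBsum
  have hfactor : Real.sqrt (32 * r ^ 3 / 3) =
      Real.sqrt 2 * Real.sqrt (16 * r ^ 3 / 3) := by
    rw [← Real.sqrt_mul (by norm_num : (0:ℝ) ≤ 2)]
    congr 1
    ring
  rw [hL, hfactor]
  have hb1' : (∫ x in a1..b1, |f x|) ≤ Real.sqrt (16 * r ^ 3 / 3) * Real.sqrt B1 := by
    rw [← hW1]; exact le_trans hI1 hcs1
  have hb2' : (∫ x in a2..b2, |f x|) ≤ Real.sqrt (16 * r ^ 3 / 3) * Real.sqrt B2 := by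
    rw [← hW2]; exact le_trans hI2 hcs2
  have hWs : 0 ≤ Real.sqrt (16 * r ^ 3 / 3) := Real.sqrt_nonneg _
  calc (∫ x in a1..b1, |f x|) + ∫ x in a2..b2, |f x|
      ≤ Real.sqrt (16 * r ^ 3 / 3) * (Real.sqrt B1 + Real.sqrt B2) := by
        rw [mul_add]; linarith
    _ ≤ Real.sqrt (16 * r ^ 3 / 3) * (Real.sqrt 2 * Real.sqrt Btot) := by
        exact mul_le_mul_of_nonneg_left hsum hWs
    _ = Real.sqrt 2 * Real.sqrt (16 * r ^ 3 / 3) * Real.sqrt Btot := by ring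
end

section
/- Let w : ℝ → ℝ be integrable, odd, and such that w(y) ≤ 0 for y > 0, with w not identically zero. Define U(x) = (1/π)∫_ℝ w(y)·ln|x-y| dy. Then U(0) = 0 and for x ≠ 0, U(x) is nonzero and has the same sign as x. -/
open MeasureTheory

lemma log_int_Ioc (R : ℝ) : IntegrableOn Real.log (Set.Ioc 0 R) volume := by
  rcases le_or_gt R 0 with hR | hR
  · rw [Set.Ioc_eq_empty (by exact fun h => absurd h (not_lt.2 hR))]
    exact integrableOn_empty
  · have hrp : IntegrableOn (fun y : ℝ => y ^ (-(1/2) : ℝ)) (Set.Ioc 0 R) volume := by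
      have h := intervalIntegral.intervalIntegrable_rpow' (a := 0) (b := R)
        (r := -(1/2)) (by norm_num)
      rwa [intervalIntegrable_iff_integrableOn_Ioc_of_le hR.le] at h
    have hmaj : IntegrableOn (fun y : ℝ => 2 * y ^ (-(1/2) : ℝ) + |Real.log R|)
        (Set.Ioc 0 R) volume :=
      (hrp.const_mul 2).add (integrableOn_const (by simp [Real.volume_Ioc]))
    refine Integrable.mono' hmaj Real.measurable_log.aestronglyMeasurable ?_
    rw [ae_restrict_iff' measurableSet_Ioc]
    refine ae_of_all _ fun y hy => ?_
    obtain ⟨hy0, hyR⟩ := hy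
    have habs : (0:ℝ) ≤ |Real.log R| := abs_nonneg _
    rcases le_or_gt y 1 with h1 | h1
    · rw [Real.norm_eq_abs, abs_of_nonpos (Real.log_nonpos hy0.le h1)]
      have h2 : Real.log (y ^ (-(1/2):ℝ)) = (-(1/2)) * Real.log y := Real.log_rpow hy0 _
      have h3 : Real.log (y ^ (-(1/2):ℝ)) ≤ y ^ (-(1/2):ℝ) - 1 :=
        Real.log_le_sub_one_of_pos (Real.rpow_pos_of_pos hy0 _)
      nlinarith [Real.rpow_pos_of_pos hy0 (-(1/2):ℝ)]
    · rw [Real.norm_eq_abs, abs_of_nonneg (Real.log_nonneg h1.le)]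
      have h2 : Real.log y ≤ Real.log R := Real.log_le_log (by linarith) hyR
      have h3 : Real.log R ≤ |Real.log R| := le_abs_self _
      have h4 : (0:ℝ) ≤ 2 * y ^ (-(1/2):ℝ) := by positivity
      linarith

lemma log_intervalIntegrable (a b : ℝ) : IntervalIntegrable Real.log volume a b := by
  have h0 : ∀ c : ℝ, IntervalIntegrable Real.log volume 0 c := by
    intro c
    rcases le_or_gt 0 c with hc | hc
    · exact (intervalIntegrable_iff_integrableOn_Ioc_of_le hc).2 (log_int_Ioc c)
    · have h := (intervalIntegrable_iff_integrableOn_Ioc_of_le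
        (by linarith : (0:ℝ) ≤ -c)).2 (log_int_Ioc (-c))
      have h2 := h.comp_sub_left 0
      simp only [zero_sub, neg_neg, neg_zero, Real.log_neg_eq_log] at h2
      simpa using h2
  exact (h0 a).symm.trans (h0 b)

lemma logsub_intervalIntegrable (x a b : ℝ) :
    IntervalIntegrable (fun y => Real.log |x - y|) volume a b := by
  have h := (log_intervalIntegrable (x - a) (x - b)).comp_sub_left x
  simp only [sub_sub_cancel] at h
  have h2 : (fun y => Real.log |x - y|) = fun y => Real.log (x - y) := by
    funext y; rw [Real.log_abs]
  rw [h2]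
  exact h

lemma key_int (w : ℝ → ℝ) (hcont : Continuous w) (hcs : HasCompactSupport w) (x : ℝ) :
    Integrable (fun y => w y * Real.log |x - y|) := by
  set K := tsupport w with hKdef
  have hK : IsCompact K := hcs
  have hKm : MeasurableSet K := (isClosed_tsupport w).measurableSet
  obtain ⟨r, hr⟩ := hK.isBounded.subset_closedBall 0
  set R : ℝ := max r 0 with hRdef
  have hsub : K ⊆ Set.Icc (-R) R := by
    intro y hy
    have h1 := hr hy
    rw [Metric.mem_closedBall, Real.dist_eq, sub_zero] at h1
    have h2 : |y| ≤ R := le_trans h1 (le_max_left _ _)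
    exact abs_le.1 h2
  have hlog : IntegrableOn (fun y => Real.log |x - y|) K volume := by
    refine IntegrableOn.mono_set ?_ hsub
    refine (intervalIntegrable_iff_integrableOn_Icc_of_le ?_).1
      (logsub_intervalIntegrable x (-R) R)
    have : (0:ℝ) ≤ R := le_max_right _ _
    linarith
  have hon : IntegrableOn (fun y => w y * Real.log |x - y|) K volume :=
    IntegrableOn.continuousOn_mul hcont.continuousOn hlog hK
  have heq : (fun y => w y * Real.log |x - y|)
      = K.indicator (fun y => w y * Real.log |x - y|) := by
    funext y
    rcases em (y ∈ K) with h | h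
    · rw [Set.indicator_of_mem h]
    · rw [Set.indicator_of_notMem h, image_eq_zero_of_notMem_tsupport h, zero_mul]
  rw [heq]
  exact (integrable_indicator_iff hKm).2 hon

theorem log_potential_sign (w : ℝ → ℝ) (U : ℝ → ℝ)
    (hcont : Continuous w) (hcs : HasCompactSupport w)
    (hodd : ∀ y, w (-y) = -w y)
    (hneg : ∀ y, 0 < y → w y ≤ 0)
    (hne : w ≠ 0)
    (hU : ∀ x, U x = (1 / Real.pi) * ∫ y, w y * Real.log |x - y|) :
    U 0 = 0 ∧ ∀ x : ℝ, x ≠ 0 → U x ≠ 0 ∧ (0 < x ↔ 0 < U x) := by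
  have hint : ∀ x : ℝ, Integrable (fun y => w y * Real.log |x - y|) :=
    key_int w hcont hcs
  have hswap : ∀ x : ℝ, (∫ y, w y * Real.log |x + y|)
      = - ∫ y, w y * Real.log |x - y| := by
    intro x
    have h2 := integral_neg_eq_self (fun y => w y * Real.log |x - y|) volume
    have h1 : (fun y : ℝ => w (-y) * Real.log |x - -y|)
        = fun y => -(w y * Real.log |x + y|) := by
      funext y; rw [hodd, sub_neg_eq_add, neg_mul]
    rw [h1, integral_neg] at h2
    linarith
  have hU0 : U 0 = 0 := by
    have h := hswap 0
    simp only [zero_add, zero_sub, abs_neg] at h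
    have hz : (∫ y, w y * Real.log |y|) = 0 := by linarith
    rw [hU 0]
    simp only [zero_sub, abs_neg]
    rw [hz, mul_zero]
  have hpos : ∀ x : ℝ, 0 < x → 0 < ∫ y, w y * Real.log |x - y| := by
    intro x hx
    set F : ℝ → ℝ := fun y => w y * (Real.log |x - y| - Real.log |x + y|) with hFdef
    have hFeq : F = fun y => w y * Real.log |x - y| - w y * Real.log |(-x) - y| := by
      funext y
      have habs : |x + y| = |(-x) - y| := by rw [← abs_neg (-x - y)]; ring_nf
      show w y * (Real.log |x - y| - Real.log |x + y|) = _
      rw [habs, mul_sub]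
    have hFint : Integrable F := by
      rw [hFeq]; exact (hint x).sub (hint (-x))
    have hFval : (∫ y, F y) = 2 * ∫ y, w y * Real.log |x - y| := by
      rw [hFeq, integral_sub (hint x) (hint (-x))]
      have h3 : (∫ y, w y * Real.log |(-x) - y|) = ∫ y, w y * Real.log |x + y| := by
        congr 1; funext y; congr 2
        rw [← abs_neg]; ring_nf
      rw [h3, hswap x]; ring
    have hlog_le : ∀ z : ℝ, 0 < z → z ≠ x → Real.log |x - z| ≤ Real.log (x + z) := by
      intro z hz hzx
      apply Real.log_le_log
      · exact abs_pos.2 (sub_ne_zero.2 fun h => hzx (by linarith))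
      · exact abs_le.2 ⟨by linarith, by linarith⟩
    have hkey : ∀ y : ℝ, y ≠ x → y ≠ -x → 0 ≤ F y := by
      intro y hy1 hy2
      show 0 ≤ w y * (Real.log |x - y| - Real.log |x + y|)
      rcases lt_trichotomy y 0 with hy | hy | hy
      · have hz : 0 < -y := by linarith
        have hzx : -y ≠ x := fun h => hy2 (by linarith)
        have hw' : 0 ≤ w y := by
          have h5 := hneg (-y) hz
          have h6 := hodd y
          linarith
        have h7 := hlog_le (-y) hz hzx
        have h8 : |x - y| = |x + -y| := by ring_nf
        have h9 : |x + y| = |x - -y| := by ring_nf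
        have h10 : |x + -y| = x + -y := abs_of_pos (by linarith)
        have h11 : Real.log |x - y| - Real.log |x + y| ≥ 0 := by
          rw [h8, h9, h10]
          linarith
        exact mul_nonneg hw' h11
      · subst hy
        simp
      · have hw' : w y ≤ 0 := hneg y hy
        have h7 := hlog_le y hy hy1
        have h10 : |x + y| = x + y := abs_of_pos (by linarith)
        have h11 : Real.log |x - y| - Real.log |x + y| ≤ 0 := by rw [h10]; linarith
        nlinarith [mul_nonneg (neg_nonneg.2 hw') (neg_nonneg.2 h11)]
    have hae1 : ∀ᵐ y : ℝ, y ≠ x := by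
      rw [ae_iff]
      have : {a : ℝ | ¬a ≠ x} = {x} := by ext a; simp
      rw [this]
      exact measure_singleton x
    have hae2 : ∀ᵐ y : ℝ, y ≠ -x := by
      rw [ae_iff]
      have : {a : ℝ | ¬a ≠ -x} = {-x} := by ext a; simp
      rw [this]
      exact measure_singleton (-x)
    have hae : 0 ≤ᵐ[volume] F := by
      filter_upwards [hae1, hae2] with y h1 h2
      exact hkey y h1 h2
    obtain ⟨y1, hy1⟩ : ∃ y, w y ≠ 0 := Function.ne_iff.1 hne
    have hw0 : w 0 = 0 := by
      have h := hodd 0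
      rw [neg_zero] at h
      linarith
    set y0 : ℝ := |y1| with hy0def
    have hy0pos : 0 < y0 := abs_pos.2 fun h => hy1 (h ▸ hw0)
    have hwy0 : w y0 < 0 := by
      have hne0 : w y0 ≠ 0 := by
        rcases abs_choice y1 with h | h
        · rw [hy0def, h]; exact hy1
        · rw [hy0def, h, hodd]
          simpa using hy1
      exact lt_of_le_of_ne (hneg y0 hy0pos) hne0
    have hopen : IsOpen {y : ℝ | w y < 0} := isOpen_lt hcont continuous_const
    obtain ⟨δ, hδpos, hδ⟩ := Metric.isOpen_iff.1 hopen y0 hwy0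
    set ε : ℝ := min δ y0 with hεdef
    have hεpos : 0 < ε := lt_min hδpos hy0pos
    have hεδ : ε ≤ δ := min_le_left _ _
    have hεy0 : ε ≤ y0 := min_le_right _ _
    have hball : Set.Ioo (y0 - ε) (y0 + ε) ⊆ {y : ℝ | w y < 0} := by
      intro y hy
      apply hδ
      rw [Metric.mem_ball, Real.dist_eq]
      have : |y - y0| < ε := abs_lt.2 ⟨by linarith [hy.1], by linarith [hy.2]⟩
      linarith
    have hsupp : Set.Ioo (y0 - ε) (y0 + ε) \ {x} ⊆ Function.support F := by
      rintro y ⟨hyI, hyx⟩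
      have hyx' : y ≠ x := by simpa using hyx
      have hy' : 0 < y := by have := hyI.1; linarith
      have hwy : w y < 0 := hball hyI
      have hlt : Real.log |x - y| < Real.log (x + y) := by
        apply Real.log_lt_log
        · exact abs_pos.2 (sub_ne_zero.2 fun h => hyx' (by linarith))
        · exact abs_lt.2 ⟨by linarith, by linarith⟩
      have h10 : |x + y| = x + y := abs_of_pos (by linarith)
      have hFy : 0 < F y := by
        show 0 < w y * (Real.log |x - y| - Real.log |x + y|)
        rw [h10]
        exact mul_pos_of_neg_of_neg hwy (by linarith)
      exact Function.mem_support.2 (ne_of_gt hFy)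
    have hvol : 0 < volume (Function.support F) := by
      have h1 : volume (Set.Ioo (y0 - ε) (y0 + ε) \ {x})
          ≤ volume (Function.support F) := measure_mono hsupp
      have h2 : volume (Set.Ioo (y0 - ε) (y0 + ε) \ {x})
          = volume (Set.Ioo (y0 - ε) (y0 + ε)) := measure_diff_null (measure_singleton x)
      rw [h2, Real.volume_Ioo] at h1
      refine lt_of_lt_of_le ?_ h1
      rw [ENNReal.ofReal_pos]
      linarith
    have hFpos : 0 < ∫ y, F y :=
      (integral_pos_iff_support_of_nonneg_ae hae hFint).2 hvol
    linarith [hFval]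
  have hπ : 0 < 1 / Real.pi := by positivity
  refine ⟨hU0, fun x hx => ?_⟩
  rcases hx.lt_or_gt with hx' | hx'
  · have h1 : 0 < ∫ y, w y * Real.log |(-x) - y| := hpos (-x) (by linarith)
    have hIodd : (∫ y, w y * Real.log |x - y|)
        = - ∫ y, w y * Real.log |(-x) - y| := by
      have h0 : (fun y => w y * Real.log |x - y|)
          = fun y => w y * Real.log |(-x) + y| := by
        funext y
        rw [neg_add_eq_sub, abs_sub_comm]
      rw [h0]
      exact hswap (-x)
    have h2 : U x < 0 := by
      rw [hU x, hIodd]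
      nlinarith
    exact ⟨ne_of_lt h2, ⟨fun h => absurd h (by linarith), fun h => absurd h (by linarith)⟩⟩
  · have h1 : 0 < ∫ y, w y * Real.log |x - y| := hpos x hx'
    have h2 : 0 < U x := by
      rw [hU x]
      exact mul_pos hπ h1
    exact ⟨ne_of_gt h2, ⟨fun _ => h2, fun _ => hx'⟩⟩
end

section
/- Let α ∈ (0, 1/2), let c > 0, and set A' = e^{(3-2α)c/4} > 1. Define I_{n+1} = A'·(1 - e^{-I_n}). Then for every n ≥ 0: if I₀ ≥ c·A'^{-n}·e^{2/(1-2α)}, then I_n ≥ c. -/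
lemma key_ineq (x : ℝ) (hx : 0 ≤ x) :
    x * Real.exp (-(x / 2)) ≤ 1 - Real.exp (-x) := by
  have h1 : x / 2 ≤ Real.sinh (x / 2) := Real.self_le_sinh_iff.2 (by linarith)
  rw [Real.sinh_eq] at h1
  have h2 : (0:ℝ) < Real.exp (-(x / 2)) := Real.exp_pos _
  have h3 : Real.exp (-(x / 2)) * Real.exp (x / 2) = 1 := by
    rw [← Real.exp_add]; simp
  have h4 : Real.exp (-(x / 2)) * Real.exp (-(x / 2)) = Real.exp (-x) := by
    rw [← Real.exp_add]; ring_nf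
  nlinarith [mul_le_mul_of_nonneg_left h1 h2.le]

theorem recursion_lower_bound (α c : ℝ) (hα0 : 0 < α) (hα : α < 1 / 2) (hc : 0 < c)
    (I : ℕ → ℝ) (hI0 : 0 < I 0)
    (hrec : ∀ n, I (n + 1) = Real.exp ((3 - 2 * α) * c / 4) * (1 - Real.exp (-(I n)))) :
    ∀ n : ℕ,
      c * Real.exp (2 / (1 - 2 * α)) / (Real.exp ((3 - 2 * α) * c / 4)) ^ n ≤ I 0 →
      c ≤ I n := by
  intro n h0
  set A : ℝ := Real.exp ((3 - 2 * α) * c / 4) with hAdef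
  set t : ℝ := (1 - 2 * α) * c / 4 with htdef
  have h2α : 0 < 1 - 2 * α := by linarith
  have ht : 0 < t := by positivity
  have hApos : 0 < A := Real.exp_pos _
  have hAe : A * Real.exp (-(c / 2)) = Real.exp t := by
    rw [hAdef, ← Real.exp_add]; congr 1; rw [htdef]; ring
  have hpos : ∀ m, 0 < I m := by
    intro m
    induction m with
    | zero => exact hI0
    | succ k ih =>
      rw [hrec]
      have : Real.exp (-(I k)) < 1 := by
        rw [← Real.exp_zero]; exact Real.exp_lt_exp.2 (by linarith)
      have : 0 < 1 - Real.exp (-(I k)) := by linarith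
      positivity
  -- step: once above c, stays above c
  have hstep : ∀ m, c ≤ I m → c ≤ I (m + 1) := by
    intro m hm
    rw [hrec]
    have h1 : c * Real.exp (-(c / 2)) ≤ 1 - Real.exp (-c) := key_ineq c hc.le
    have h2 : Real.exp (-(I m)) ≤ Real.exp (-c) := Real.exp_le_exp.2 (by linarith)
    have het : (1:ℝ) ≤ Real.exp t := by
      rw [← Real.exp_zero]; exact Real.exp_le_exp.2 ht.le
    have : c * Real.exp t ≤ A * (1 - Real.exp (-(I m))) := by
      calc c * Real.exp t = A * (c * Real.exp (-(c / 2))) := by rw [← hAe]; ring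
        _ ≤ A * (1 - Real.exp (-c)) := by
            exact mul_le_mul_of_nonneg_left h1 hApos.le
        _ ≤ A * (1 - Real.exp (-(I m))) := by
            apply mul_le_mul_of_nonneg_left _ hApos.le; linarith
    nlinarith
  by_cases hex : ∃ m ≤ n, c ≤ I m
  · obtain ⟨m, hmn, hcm⟩ := hex
    have hall : ∀ k, c ≤ I (m + k) := by
      intro k
      induction k with
      | zero => exact hcm
      | succ j ih => exact hstep _ ih
    have := hall (n - m)
    rwa [Nat.add_sub_cancel' hmn] at this
  · push_neg at hex
    exfalso
    -- all I m < c for m ≤ n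
    have hgrow : ∀ m, A * Real.exp (-(I m) / 2) * I m ≤ I (m + 1) := by
      intro m
      rw [hrec]
      have := key_ineq (I m) (hpos m).le
      calc A * Real.exp (-(I m) / 2) * I m
          = A * (I m * Real.exp (-(I m / 2))) := by rw [neg_div]; ring
        _ ≤ A * (1 - Real.exp (-(I m))) := mul_le_mul_of_nonneg_left this hApos.le
    -- chain lower bound
    have hchain : ∀ m, A ^ m * Real.exp (-(∑ j ∈ Finset.range m, I j) / 2) * I 0 ≤ I m := by
      intro m
      induction m with
      | zero => simp
      | succ k ih =>
        have hkey : A ^ (k + 1) * Real.exp (-(∑ j ∈ Finset.range (k + 1), I j) / 2) * I 0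
            = A * Real.exp (-(I k) / 2) * (A ^ k * Real.exp (-(∑ j ∈ Finset.range k, I j) / 2) * I 0) := by
          rw [Finset.sum_range_succ, pow_succ,
            show -((∑ j ∈ Finset.range k, I j) + I k) / 2
              = -(∑ j ∈ Finset.range k, I j) / 2 + -(I k) / 2 by ring, Real.exp_add]
          ring
        rw [hkey]
        calc A * Real.exp (-(I k) / 2) * (A ^ k * Real.exp (-(∑ j ∈ Finset.range k, I j) / 2) * I 0)
            ≤ A * Real.exp (-(I k) / 2) * I k := by
              apply mul_le_mul_of_nonneg_left ih; positivity
          _ ≤ I (k + 1) := hgrow k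
    -- geometric growth while below c
    have hratio : ∀ m k, m + k ≤ n → Real.exp (t * k) * I m ≤ I (m + k) := by
      intro m k
      induction k with
      | zero => intro _; simp
      | succ j ih =>
        intro hle
        have hle' : m + j ≤ n := by omega
        have h1 : I (m + j) < c := hex _ hle'
        have h2 : Real.exp (-c / 2) ≤ Real.exp (-(I (m + j)) / 2) :=
          Real.exp_le_exp.2 (by linarith)
        have h3 : Real.exp t * I (m + j) ≤ I (m + j + 1) := by
          calc Real.exp t * I (m + j) = A * Real.exp (-(c / 2)) * I (m + j) := by rw [hAe]
            _ ≤ A * Real.exp (-(I (m + j)) / 2) * I (m + j) := by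
                apply mul_le_mul_of_nonneg_right _ (hpos _).le
                apply mul_le_mul_of_nonneg_left _ hApos.le
                rw [neg_div] at h2; exact h2
            _ ≤ I (m + j + 1) := hgrow _
        have h4 := ih hle'
        have hcast : Real.exp (t * (j + 1 : ℕ)) = Real.exp t * Real.exp (t * j) := by
          rw [← Real.exp_add]; push_cast; ring_nf
        calc Real.exp (t * (j + 1 : ℕ)) * I m
            = Real.exp t * (Real.exp (t * j) * I m) := by rw [hcast]; ring
          _ ≤ Real.exp t * I (m + j) := by
              apply mul_le_mul_of_nonneg_left h4 (Real.exp_pos t).le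
          _ ≤ I (m + j + 1) := h3
    -- each term bound: I m ≤ c * r^(n-m)
    set r : ℝ := Real.exp (-t) with hrdef
    have hr0 : 0 < r := Real.exp_pos _
    have hr1 : r < 1 := by
      rw [hrdef, ← Real.exp_zero]; exact Real.exp_lt_exp.2 (by linarith)
    have hterm : ∀ m, m < n → I m ≤ c * r ^ (n - m) := by
      intro m hm
      have h1 := hratio m (n - m) (by omega)
      rw [Nat.add_sub_cancel' hm.le] at h1
      have h2 : I n < c := hex n le_rfl
      have h3 : Real.exp (t * (n - m : ℕ)) * I m < c := lt_of_le_of_lt h1 h2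
      have h4 : r ^ (n - m) = Real.exp (-(t * (n - m : ℕ))) := by
        rw [hrdef, ← Real.exp_nat_mul]; congr 1; ring
      have h5 : 0 < Real.exp (t * (n - m : ℕ)) := Real.exp_pos _
      rw [h4, Real.exp_neg, ← div_eq_mul_inv, le_div_iff₀ h5]
      nlinarith [h3]
    -- sum bound
    set S : ℝ := ∑ j ∈ Finset.range n, I j with hSdef
    have hgeom : ∑ j ∈ Finset.range n, r ^ j ≤ 1 / (1 - r) := by
      have hmul : (1 - r) * ∑ j ∈ Finset.range n, r ^ j = 1 - r ^ n := by
        linear_combination -(geom_sum_mul r n)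
      rw [le_div_iff₀ (by linarith : (0:ℝ) < 1 - r)]
      have hrn : 0 < r ^ n := pow_pos hr0 n
      nlinarith [hmul]
    have hSsum : S ≤ c * (r / (1 - r)) := by
      have h1 : S ≤ ∑ j ∈ Finset.range n, c * r ^ (n - j) := by
        apply Finset.sum_le_sum
        intro j hj
        exact hterm j (Finset.mem_range.1 hj)
      have h2 : ∑ j ∈ Finset.range n, c * r ^ (n - j)
          = c * r * ∑ j ∈ Finset.range n, r ^ (n - 1 - j) := by
        rw [Finset.mul_sum]
        apply Finset.sum_congr rfl
        intro j hj
        have hjn : j < n := Finset.mem_range.1 hj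
        have : n - j = (n - 1 - j) + 1 := by omega
        rw [this, pow_succ]; ring
      have h3 : ∑ j ∈ Finset.range n, r ^ (n - 1 - j) = ∑ j ∈ Finset.range n, r ^ j :=
        Finset.sum_range_reflect (fun j => r ^ j) n
      calc S ≤ ∑ j ∈ Finset.range n, c * r ^ (n - j) := h1
        _ = c * r * ∑ j ∈ Finset.range n, r ^ j := by rw [h2, h3]
        _ ≤ c * r * (1 / (1 - r)) := by
            apply mul_le_mul_of_nonneg_left hgeom (by positivity)
        _ = c * (r / (1 - r)) := by ring
    -- c * r / (1 - r) < c / t  ⟺  (1+t) * e^{-t} < 1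
    have hSt : S < c / t := by
      have h1 : (1 + t) < Real.exp t := by
        have := Real.add_one_lt_exp (x := t) (ne_of_gt ht)
        linarith
      have hE : 0 < Real.exp t := Real.exp_pos t
      have hE1 : (1:ℝ) < Real.exp t := by linarith
      have hrE : r = (Real.exp t)⁻¹ := by rw [hrdef, Real.exp_neg]
      have hfrac : r / (1 - r) = 1 / (Real.exp t - 1) := by
        rw [hrE]
        rw [div_eq_div_iff]
        · field_simp
        · have : (Real.exp t)⁻¹ < 1 := by
            rw [inv_lt_one_iff₀]; right; exact hE1
          linarith
        · linarith
      have h2 : c * (1 / (Real.exp t - 1)) < c / t := by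
        rw [mul_one_div, div_lt_div_iff₀ (by linarith) ht]
        nlinarith
      calc S ≤ c * (r / (1 - r)) := hSsum
        _ = c * (1 / (Real.exp t - 1)) := by rw [hfrac]
        _ < c / t := h2
    -- final contradiction
    have hct : c / t = 4 / (1 - 2 * α) := by
      rw [htdef]; field_simp
    have hS2 : S / 2 < 2 / (1 - 2 * α) := by
      rw [hct] at hSt
      have h4 : (4:ℝ) / (1 - 2 * α) = 2 * (2 / (1 - 2 * α)) := by ring
      rw [h4] at hSt; linarith
    have hfin := hchain n
    have hAn : 0 < A ^ n := pow_pos hApos n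
    have hlow : A ^ n * Real.exp (-S / 2) * (c * Real.exp (2 / (1 - 2 * α)) / A ^ n)
        ≤ A ^ n * Real.exp (-S / 2) * I 0 := by
      apply mul_le_mul_of_nonneg_left h0; positivity
    have heq : A ^ n * Real.exp (-S / 2) * (c * Real.exp (2 / (1 - 2 * α)) / A ^ n)
        = c * (Real.exp (-S / 2) * Real.exp (2 / (1 - 2 * α))) := by
      field_simp
    have hone : 1 < Real.exp (-S / 2) * Real.exp (2 / (1 - 2 * α)) := by
      rw [← Real.exp_add]
      have := Real.exp_lt_exp.2 (show (0:ℝ) < -S / 2 + 2 / (1 - 2 * α) by linarith)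
      simpa using this
    have hInc : c < I n := by
      have : c * 1 < c * (Real.exp (-S / 2) * Real.exp (2 / (1 - 2 * α))) :=
        mul_lt_mul_of_pos_left hone hc
      calc c = c * 1 := by ring
        _ < c * (Real.exp (-S / 2) * Real.exp (2 / (1 - 2 * α))) := this
        _ = A ^ n * Real.exp (-S / 2) * (c * Real.exp (2 / (1 - 2 * α)) / A ^ n) := heq.symm
        _ ≤ A ^ n * Real.exp (-S / 2) * I 0 := hlow
        _ ≤ I n := by
            have := hchain n
            rw [show -S / 2 = -(S) / 2 by ring]
            exact this
    exact absurd hInc (not_lt.2 (hex n le_rfl).le)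
end
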